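/- Let a = 31207386885274502188173522132023665167365193670823768234185354856354918873864275 and M = 36812852443922071184402498913076070503146229820861211558347078871354783744850778, and for n ∈ ℕ set u_n = F_{3n}/2. Then for every integer x with x ≡ a (mod M) and all k, b ∈ ℕ, one has x² − u_{4+10k} ≠ 31^b and x² − u_{4+10k} ≠ −31^b. -/

import Mathlib

/-!
Everything is reduced modulo `1991 = 11 · 181`, a divisor of the modulus, where `x ≡ 257`.
Modulo `1991` the Fibonacci sequence has period `90`, so `2 u_{4+10k} = F_{12+30k}` only
depends on `k mod 3`, and `31 ^ 20 = 1`, so `31 ^ b` only depends on `b mod 20`.  Doubling the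
equation `x² - u = ±31 ^ b` leaves finitely many congruences,
refuted by computation.
-/

/-- `u n = F_{3n} / 2`, an integer since `F_{3n}` is always even. -/
def u (n : ℕ) : ℤ := (Nat.fib (3 * n) : ℤ) / 2

open Nat

theorem two_mul_u (n : ℕ) : 2 * u n = fib (3 * n) := by
  have h2 : (2 : ℤ) ∣ fib (3 * n) := by
    exact_mod_cast Nat.fib_dvd 3 (3 * n) (Dvd.intro n rfl)
  exact Int.mul_ediv_cancel' h2

section FibPeriod

variable {R : Type*} [CommSemiring R] {p : ℕ}

theorem cast_fib_add_of_period (h0 : (fib p : R) = 0) (h1 : (fib (p + 1) : R) = 1) (n : ℕ) :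
    (fib (n + p) : R) = fib n := by
  rcases n with _ | n
  · simpa using h0
  · rw [add_right_comm, fib_add]
    push_cast
    rw [h0, h1]
    ring

theorem cast_fib_mod_of_period (h0 : (fib p : R) = 0) (h1 : (fib (p + 1) : R) = 1) (n : ℕ) :
    (fib (n % p) : R) = fib n := by
  conv_rhs => rw [← Nat.mod_add_div n p]
  induction n / p with
  | zero => rfl
  | succ j ih => rw [Nat.mul_succ, ← add_assoc, cast_fib_add_of_period h0 h1, ih]

end FibPeriod

theorem two_mul_u_four_add_ten_mul (k : ℕ) :
    2 * (u (4 + 10 * k) : ZMod 1991) = fib (12 + 30 * (k % 3)) := by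
  have h := congrArg (Int.cast : ℤ → ZMod 1991) (two_mul_u (4 + 10 * k))
  push_cast at h
  rw [h, ← cast_fib_mod_of_period (p := 90) (by decide) (by decide)]
  congr 2
  omega

theorem two_mul_257_sq_sub_fib_ne_pm_two_mul_31_pow : ∀ r < 3, ∀ s < 20,
    2 * (257 : ZMod 1991) ^ 2 - fib (12 + 30 * r) ≠ 2 * 31 ^ s ∧
    2 * (257 : ZMod 1991) ^ 2 - fib (12 + 30 * r) ≠ -(2 * 31 ^ s) := by
  decide

/-- Case 4.2 of the proof of Theorem 1.3: for every integer
`x ≡ a (mod M)` and all `k, b ∈ ℕ`, `x² - u_{4+10k}` is not `±31^b`. -/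
theorem sq_sub_u_ne_pm_pow_31
    (x : ℤ)
    (hx : x ≡ 31207386885274502188173522132023665167365193670823768234185354856354918873864275
      [ZMOD 36812852443922071184402498913076070503146229820861211558347078871354783744850778])
    (k b : ℕ) :
    x ^ 2 - u (4 + 10 * k) ≠ 31 ^ b ∧ x ^ 2 - u (4 + 10 * k) ≠ -(31 ^ b) := by
  have hx257 : (x : ZMod 1991) = 257 := by
    rw [(ZMod.intCast_eq_intCast_iff _ _ _).mpr (hx.of_dvd (by norm_num))]
    decide
  have h31 : (31 : ZMod 1991) ^ b = 31 ^ (b % 20) := pow_eq_pow_mod b (by decide)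
  obtain ⟨hpos, hneg⟩ :=
    two_mul_257_sq_sub_fib_ne_pm_two_mul_31_pow (k % 3) (by omega) (b % 20) (by omega)
  rw [← hx257, ← two_mul_u_four_add_ten_mul, ← h31] at hpos hneg
  constructor <;> intro h <;> [apply hpos; apply hneg] <;>
    · have h := congrArg (Int.cast : ℤ → ZMod 1991) h
      push_cast at h
      linear_combination 2 * h
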